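/- Moments of second and third derivatives of the DAR(1) quasi-log-likelihood (Lemma A.10 of the paper, higher-order part): In the DAR(1) setup, for every real d ≥ 1 and all parameter coordinates θ_i, θ_j, θ_k ∈ {φ, ω, α}, E[ sup_{θ∈Θ} |(∂²l/∂θ_i∂θ_j)(θ)|^d ] < ∞ and E[ sup_{θ∈Θ} |(∂³l/∂θ_i∂θ_j∂θ_k)(θ)|^d ] < ∞. -/

import Mathlib

open MeasureTheory ProbabilityTheory

/-- DAR(1) parameter space `Θ = {(φ, ω, α) : |φ| ≤ c₁, c₂ ≤ ω ≤ c₃, c₄ ≤ α ≤ c₅}`. -/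
def darTheta (c₁ c₂ c₃ c₄ c₅ : ℝ) : Set (ℝ × ℝ × ℝ) :=
  {θ | |θ.1| ≤ c₁ ∧ c₂ ≤ θ.2.1 ∧ θ.2.1 ≤ c₃ ∧ c₄ ≤ θ.2.2 ∧ θ.2.2 ≤ c₅}

/-- DAR(1) Gaussian quasi-log-likelihood
`l(θ) = -(1/2) log(ω + α Y²) − (X − φ Y)²/(2(ω + α Y²))` for `θ = (φ, ω, α)`. -/
noncomputable def darL (Y X : ℝ) (θ : ℝ × ℝ × ℝ) : ℝ :=
  -(1 / 2) * Real.log (θ.2.1 + θ.2.2 * Y ^ 2)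
    - (X - θ.1 * Y) ^ 2 / (2 * (θ.2.1 + θ.2.2 * Y ^ 2))

/-! On `Θ` the conditional variance `s(θ) = ω + α Y²` satisfies `s ≥ c₂` and `s ≥ c₄ Y²`. The
second and third derivatives of `l` are polynomials in the scale-free quantities
`∂ᵥ s / s`, `v.1 Y / √s` and `u / √s`, where `u(θ) = X − φ Y`; along coordinate directions the first
two are bounded by constants, and `u / √s` by a constant times `1 + |e|`, because
`u = (φ₀ − φ) Y + e √s(θ₀)`. So each derivative is bounded uniformly on `Θ` by `C (1 + |e|)ⁿ`,
and a Gaussian `e` has moments of every order. -/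

noncomputable section

theorem HasFDerivAt.inv_of_ne_zero {E : Type*} [NormedAddCommGroup E] [NormedSpace ℝ E]
    {f : E → ℝ} {f' : E →L[ℝ] ℝ} {x : E} (hf : HasFDerivAt f f' x) (hx : f x ≠ 0) :
    HasFDerivAt (fun y => (f y)⁻¹) (-(f x ^ 2)⁻¹ • f') x :=
  (hasDerivAt_inv hx).comp_hasFDerivAt x hf

def darVar (Y : ℝ) (θ : ℝ × ℝ × ℝ) : ℝ := θ.2.1 + θ.2.2 * Y ^ 2

def darResid (Y X : ℝ) (θ : ℝ × ℝ × ℝ) : ℝ := X - θ.1 * Y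

section Derivatives

variable (Y X : ℝ)

def darLDeriv1 (a θ : ℝ × ℝ × ℝ) : ℝ :=
  -(1 / 2) * darVar Y a * (darVar Y θ)⁻¹ + a.1 * Y * darResid Y X θ * (darVar Y θ)⁻¹
    + 1 / 2 * darVar Y a * darResid Y X θ ^ 2 * (darVar Y θ ^ 2)⁻¹

def darLDeriv2 (a b θ : ℝ × ℝ × ℝ) : ℝ :=
  1 / 2 * darVar Y a * darVar Y b * (darVar Y θ ^ 2)⁻¹ - a.1 * Y * (b.1 * Y) * (darVar Y θ)⁻¹
    - a.1 * Y * darResid Y X θ * darVar Y b * (darVar Y θ ^ 2)⁻¹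
    - darVar Y a * darResid Y X θ * (b.1 * Y) * (darVar Y θ ^ 2)⁻¹
    - darVar Y a * darResid Y X θ ^ 2 * darVar Y b * (darVar Y θ ^ 3)⁻¹

def darLDeriv3 (a b c θ : ℝ × ℝ × ℝ) : ℝ :=
  -(darVar Y a * darVar Y b * darVar Y c) * (darVar Y θ ^ 3)⁻¹
    + (a.1 * Y * (b.1 * Y) * darVar Y c + a.1 * Y * darVar Y b * (c.1 * Y)
      + darVar Y a * (b.1 * Y) * (c.1 * Y)) * (darVar Y θ ^ 2)⁻¹
    + 2 * darResid Y X θ * (a.1 * Y * darVar Y b * darVar Y c + darVar Y a * (b.1 * Y) * darVar Y c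
      + darVar Y a * darVar Y b * (c.1 * Y)) * (darVar Y θ ^ 3)⁻¹
    + 3 * darResid Y X θ ^ 2 * (darVar Y a * darVar Y b * darVar Y c) * (darVar Y θ ^ 4)⁻¹

theorem hasFDerivAt_darVar (θ : ℝ × ℝ × ℝ) :
    ∃ D : (ℝ × ℝ × ℝ) →L[ℝ] ℝ, HasFDerivAt (darVar Y) D θ ∧ ∀ a, D a = darVar Y a :=
  ⟨_, hasFDerivAt_snd.fst.add (hasFDerivAt_snd.snd.mul_const (Y ^ 2)), fun a => by
    simp [darVar, mul_comm]⟩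

theorem hasFDerivAt_darResid (θ : ℝ × ℝ × ℝ) :
    ∃ D : (ℝ × ℝ × ℝ) →L[ℝ] ℝ, HasFDerivAt (darResid Y X) D θ ∧ ∀ a, D a = -(a.1 * Y) :=
  ⟨_, (hasFDerivAt_const X θ).sub (hasFDerivAt_fst.mul_const Y), fun a => by
    simp [mul_comm]⟩

theorem hasFDerivAt_darL {θ : ℝ × ℝ × ℝ} (h : darVar Y θ ≠ 0) :
    ∃ D : (ℝ × ℝ × ℝ) →L[ℝ] ℝ, HasFDerivAt (darL Y X) D θ ∧ ∀ a, D a = darLDeriv1 Y X a θ := by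
  obtain ⟨Ds, hDs, hDs_apply⟩ := hasFDerivAt_darVar Y θ
  obtain ⟨Du, hDu, hDu_apply⟩ := hasFDerivAt_darResid Y X θ
  have hD := ((hDs.log h).const_mul (-(1 / 2))).sub
    ((hDu.pow 2).mul ((hDs.const_mul 2).inv_of_ne_zero (mul_ne_zero two_ne_zero h)))
  refine ⟨_, hD, fun a => ?_⟩
  simp only [sub_apply, add_apply, smul_apply, smul_eq_mul, nsmul_eq_mul, hDs_apply, hDu_apply,
    darLDeriv1]
  field_simp
  ring

theorem hasFDerivAt_darLDeriv1 (a : ℝ × ℝ × ℝ) {θ : ℝ × ℝ × ℝ} (h : darVar Y θ ≠ 0) :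
    ∃ D : (ℝ × ℝ × ℝ) →L[ℝ] ℝ, HasFDerivAt (darLDeriv1 Y X a) D θ ∧
      ∀ b, D b = darLDeriv2 Y X a b θ := by
  obtain ⟨Ds, hDs, hDs_apply⟩ := hasFDerivAt_darVar Y θ
  obtain ⟨Du, hDu, hDu_apply⟩ := hasFDerivAt_darResid Y X θ
  have hinv := hDs.inv_of_ne_zero h
  have hinv2 := (hDs.pow 2).inv_of_ne_zero (pow_ne_zero 2 h)
  have hD := ((hinv.const_mul (-(1 / 2) * darVar Y a)).add
    ((hDu.const_mul (a.1 * Y)).mul hinv)).add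
    (((hDu.pow 2).const_mul (1 / 2 * darVar Y a)).mul hinv2)
  refine ⟨_, hD, fun b => ?_⟩
  simp only [add_apply, smul_apply, smul_eq_mul, nsmul_eq_mul, hDs_apply, hDu_apply, darLDeriv2]
  field_simp
  ring

theorem hasFDerivAt_darLDeriv2 (a b : ℝ × ℝ × ℝ) {θ : ℝ × ℝ × ℝ} (h : darVar Y θ ≠ 0) :
    ∃ D : (ℝ × ℝ × ℝ) →L[ℝ] ℝ, HasFDerivAt (darLDeriv2 Y X a b) D θ ∧
      ∀ c, D c = darLDeriv3 Y X a b c θ := by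
  obtain ⟨Ds, hDs, hDs_apply⟩ := hasFDerivAt_darVar Y θ
  obtain ⟨Du, hDu, hDu_apply⟩ := hasFDerivAt_darResid Y X θ
  have hinv := hDs.inv_of_ne_zero h
  have hinv2 := (hDs.pow 2).inv_of_ne_zero (pow_ne_zero 2 h)
  have hinv3 := (hDs.pow 3).inv_of_ne_zero (pow_ne_zero 3 h)
  have hD := ((((hinv2.const_mul (1 / 2 * darVar Y a * darVar Y b)).sub
    (hinv.const_mul (a.1 * Y * (b.1 * Y)))).sub
    (((hDu.const_mul (a.1 * Y)).mul_const (darVar Y b)).mul hinv2)).sub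
    (((hDu.const_mul (darVar Y a)).mul_const (b.1 * Y)).mul hinv2)).sub
    ((((hDu.pow 2).const_mul (darVar Y a)).mul_const (darVar Y b)).mul hinv3)
  refine ⟨_, hD, fun c => ?_⟩
  simp only [sub_apply, add_apply, smul_apply, smul_eq_mul, nsmul_eq_mul, hDs_apply, hDu_apply,
    darLDeriv3]
  field_simp
  ring

theorem isOpen_darVar_ne_zero : IsOpen {θ : ℝ × ℝ × ℝ | darVar Y θ ≠ 0} :=
  isOpen_ne_fun (by unfold darVar; fun_prop) continuous_const

theorem fderiv_darL_apply {θ : ℝ × ℝ × ℝ} (h : darVar Y θ ≠ 0) (a : ℝ × ℝ × ℝ) :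
    fderiv ℝ (darL Y X) θ a = darLDeriv1 Y X a θ := by
  obtain ⟨D, hD, hD_apply⟩ := hasFDerivAt_darL Y X h
  rw [hD.fderiv, hD_apply]

theorem fderiv_fderiv_darL_apply {θ : ℝ × ℝ × ℝ} (h : darVar Y θ ≠ 0) (a b : ℝ × ℝ × ℝ) :
    fderiv ℝ (fun θ' => fderiv ℝ (darL Y X) θ' a) θ b = darLDeriv2 Y X a b θ := by
  have hev : (fun θ' => fderiv ℝ (darL Y X) θ' a) =ᶠ[nhds θ] darLDeriv1 Y X a := by
    filter_upwards [(isOpen_darVar_ne_zero Y).mem_nhds h] with θ' h'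
    exact fderiv_darL_apply Y X h' a
  obtain ⟨D, hD, hD_apply⟩ := hasFDerivAt_darLDeriv1 Y X a h
  rw [hev.fderiv_eq, hD.fderiv, hD_apply]

theorem fderiv_fderiv_fderiv_darL_apply {θ : ℝ × ℝ × ℝ} (h : darVar Y θ ≠ 0)
    (a b c : ℝ × ℝ × ℝ) :
    fderiv ℝ (fun θ' => fderiv ℝ (fun θ'' => fderiv ℝ (darL Y X) θ'' a) θ' b) θ c
      = darLDeriv3 Y X a b c θ := by
  have hev : (fun θ' => fderiv ℝ (fun θ'' => fderiv ℝ (darL Y X) θ'' a) θ' b)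
      =ᶠ[nhds θ] darLDeriv2 Y X a b := by
    filter_upwards [(isOpen_darVar_ne_zero Y).mem_nhds h] with θ' h'
    exact fderiv_fderiv_darL_apply Y X h' a b
  obtain ⟨D, hD, hD_apply⟩ := hasFDerivAt_darLDeriv2 Y X a b h
  rw [hev.fderiv_eq, hD.fderiv, hD_apply]

end Derivatives

section Standardized

variable (Y X : ℝ) (θ : ℝ × ℝ × ℝ)

-- `darVarRatio Y θ v = ∂ᵥ log s(θ)`, `darStdRegressor Y θ v = -∂ᵥ u(θ) / √s(θ)` and
-- `darStdResid Y X θ = u(θ) / √s(θ)`, for `s = darVar Y`, `u = darResid Y X`.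
def darVarRatio (v : ℝ × ℝ × ℝ) : ℝ := darVar Y v / darVar Y θ

def darStdRegressor (v : ℝ × ℝ × ℝ) : ℝ := v.1 * Y / √(darVar Y θ)

def darStdResid : ℝ := darResid Y X θ / √(darVar Y θ)

variable {Y θ}

theorem darLDeriv2_eq (h : 0 < darVar Y θ) (a b : ℝ × ℝ × ℝ) :
    darLDeriv2 Y X a b θ = darVarRatio Y θ a * darVarRatio Y θ b / 2
      - (darStdRegressor Y θ a * darStdRegressor Y θ b
        + darStdResid Y X θ * (darStdRegressor Y θ a * darVarRatio Y θ b
          + darVarRatio Y θ a * darStdRegressor Y θ b)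
        + darStdResid Y X θ ^ 2 * (darVarRatio Y θ a * darVarRatio Y θ b)) := by
  unfold darLDeriv2 darVarRatio darStdRegressor darStdResid
  generalize darVar Y θ = s at h ⊢
  obtain ⟨r, hr, rfl⟩ : ∃ r, 0 < r ∧ s = r ^ 2 := ⟨√s, Real.sqrt_pos.2 h, (Real.sq_sqrt h.le).symm⟩
  rw [Real.sqrt_sq hr.le]
  field_simp
  ring

theorem darLDeriv3_eq (h : 0 < darVar Y θ) (a b c : ℝ × ℝ × ℝ) :
    darLDeriv3 Y X a b c θ =
      3 * darStdResid Y X θ ^ 2 * (darVarRatio Y θ a * darVarRatio Y θ b * darVarRatio Y θ c)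
      + 2 * darStdResid Y X θ * (darStdRegressor Y θ a * darVarRatio Y θ b * darVarRatio Y θ c
        + darVarRatio Y θ a * darStdRegressor Y θ b * darVarRatio Y θ c
        + darVarRatio Y θ a * darVarRatio Y θ b * darStdRegressor Y θ c)
      + (darStdRegressor Y θ a * darStdRegressor Y θ b * darVarRatio Y θ c
        + darStdRegressor Y θ a * darVarRatio Y θ b * darStdRegressor Y θ c
        + darVarRatio Y θ a * darStdRegressor Y θ b * darStdRegressor Y θ c)
      - darVarRatio Y θ a * darVarRatio Y θ b * darVarRatio Y θ c := by
  unfold darLDeriv3 darVarRatio darStdRegressor darStdResid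
  generalize darVar Y θ = s at h ⊢
  obtain ⟨r, hr, rfl⟩ : ∃ r, 0 < r ∧ s = r ^ 2 := ⟨√s, Real.sqrt_pos.2 h, (Real.sq_sqrt h.le).symm⟩
  rw [Real.sqrt_sq hr.le]
  field_simp
  ring

variable {S : Set (ℝ × ℝ × ℝ)} {R : ℝ}

theorem abs_darLDeriv2_le (h : 0 < darVar Y θ) (hR : 1 ≤ R)
    (hA : ∀ v ∈ S, |darVarRatio Y θ v| ≤ R) (hB : ∀ v ∈ S, |darStdRegressor Y θ v| ≤ R)
    (hW : |darStdResid Y X θ| ≤ R) {a b : ℝ × ℝ × ℝ} (ha : a ∈ S) (hb : b ∈ S) :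
    |darLDeriv2 Y X a b θ| ≤ 5 * R ^ 4 := by
  rw [darLDeriv2_eq X h]
  set A := darVarRatio Y θ
  set B := darStdRegressor Y θ
  set W := darStdResid Y X θ
  have hAa := hA a ha
  have hAb := hA b hb
  have hBa := hB a ha
  have hBb := hB b hb
  have hBA : |B a * A b + A a * B b| ≤ R * R + R * R := by
    grw [abs_add_le, abs_mul, abs_mul, hAa, hAb, hBa, hBb]
  calc _ ≤ |A a * A b / 2| + (|B a * B b| + |W * (B a * A b + A a * B b)|
          + |W ^ 2 * (A a * A b)|) := (abs_sub _ _).trans (by gcongr; exact abs_add_three _ _ _)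
    _ ≤ R * R / 2 + (R * R + R * (R * R + R * R) + R ^ 2 * (R * R)) := by
        simp only [abs_mul, abs_div, abs_pow, abs_two]
        gcongr
    _ ≤ 5 * R ^ 4 := by
        nlinarith [pow_le_pow_right₀ hR (show 2 ≤ 4 by norm_num),
          pow_le_pow_right₀ hR (show 3 ≤ 4 by norm_num)]

theorem abs_darLDeriv3_le (h : 0 < darVar Y θ) (hR : 1 ≤ R)
    (hA : ∀ v ∈ S, |darVarRatio Y θ v| ≤ R) (hB : ∀ v ∈ S, |darStdRegressor Y θ v| ≤ R)
    (hW : |darStdResid Y X θ| ≤ R) {a b c : ℝ × ℝ × ℝ} (ha : a ∈ S) (hb : b ∈ S)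
    (hc : c ∈ S) :
    |darLDeriv3 Y X a b c θ| ≤ 13 * R ^ 5 := by
  rw [darLDeriv3_eq X h]
  set A := darVarRatio Y θ
  set B := darStdRegressor Y θ
  set W := darStdResid Y X θ
  have hAa := hA a ha
  have hAb := hA b hb
  have hAc := hA c hc
  have hBa := hB a ha
  have hBb := hB b hb
  have hBc := hB c hc
  calc _ ≤ |3 * W ^ 2 * (A a * A b * A c)|
          + |2 * W| * (|B a * A b * A c| + |A a * B b * A c| + |A a * A b * B c|)
          + (|B a * B b * A c| + |B a * A b * B c| + |A a * B b * B c|) + |A a * A b * A c| := by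
        grw [abs_sub, abs_add_three, abs_mul (2 * W), abs_add_three (B a * A b * A c),
          abs_add_three (B a * B b * A c)]
    _ ≤ 3 * R ^ 2 * (R * R * R) + 2 * R * (R * R * R + R * R * R + R * R * R)
          + (R * R * R + R * R * R + R * R * R) + R * R * R := by
        simp only [abs_mul, abs_pow, Nat.abs_ofNat]
        gcongr
    _ ≤ 13 * R ^ 5 := by
        nlinarith [pow_le_pow_right₀ hR (show 3 ≤ 5 by norm_num),
          pow_le_pow_right₀ hR (show 4 ≤ 5 by norm_num)]

end Standardized

def coordDirs : Set (ℝ × ℝ × ℝ) := {(1, 0, 0), (0, 1, 0), (0, 0, 1)}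

theorem darVar_mem_Icc_of_mem_coordDirs (Y : ℝ) {v : ℝ × ℝ × ℝ} (hv : v ∈ coordDirs) :
    darVar Y v ∈ Set.Icc 0 (1 + Y ^ 2) := by
  rcases hv with rfl | rfl | rfl <;> simp [darVar] <;> positivity

theorem sq_fst_le_one_of_mem_coordDirs {v : ℝ × ℝ × ℝ} (hv : v ∈ coordDirs) : v.1 ^ 2 ≤ 1 := by
  rcases hv with rfl | rfl | rfl <;> simp

section ParameterSpace

variable {c₁ c₂ c₃ c₄ c₅ Y : ℝ} {θ : ℝ × ℝ × ℝ}

theorem le_darVar_of_mem (hc₄ : 0 < c₄) (hθ : θ ∈ darTheta c₁ c₂ c₃ c₄ c₅) :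
    c₂ ≤ darVar Y θ := by
  obtain ⟨-, hω, -, hα, -⟩ := hθ
  unfold darVar
  nlinarith [sq_nonneg Y]

theorem mul_sq_le_darVar_of_mem (hc₂ : 0 < c₂) (hθ : θ ∈ darTheta c₁ c₂ c₃ c₄ c₅) :
    c₄ * Y ^ 2 ≤ darVar Y θ := by
  obtain ⟨-, hω, -, hα, -⟩ := hθ
  unfold darVar
  nlinarith [sq_nonneg Y]

def darConst (c₁ c₂ c₄ ω₀ α₀ : ℝ) : ℝ :=
  1 + 1 / c₂ + 1 / c₄ + 8 * c₁ ^ 2 / c₄ + 2 * (ω₀ / c₂ + α₀ / c₄)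

theorem one_le_darConst {ω₀ α₀ : ℝ} (hc₂ : 0 < c₂) (hc₄ : 0 < c₄) (hω₀ : 0 ≤ ω₀) (hα₀ : 0 ≤ α₀) :
    1 ≤ darConst c₁ c₂ c₄ ω₀ α₀ := by
  unfold darConst
  have : 0 ≤ 8 * c₁ ^ 2 / c₄ + 2 * (ω₀ / c₂ + α₀ / c₄) := by positivity
  linarith [one_div_pos.2 hc₂, one_div_pos.2 hc₄]

variable (hc₂ : 0 < c₂) (hc₄ : 0 < c₄) (hθ : θ ∈ darTheta c₁ c₂ c₃ c₄ c₅)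
include hc₂ hc₄ hθ

theorem darVar_pos_of_mem : 0 < darVar Y θ :=
  hc₂.trans_le (le_darVar_of_mem hc₄ hθ)

theorem one_div_darVar_le : 1 / darVar Y θ ≤ 1 / c₂ :=
  one_div_le_one_div_of_le hc₂ (le_darVar_of_mem hc₄ hθ)

theorem sq_div_darVar_le : Y ^ 2 / darVar Y θ ≤ 1 / c₄ := by
  rw [div_le_div_iff₀ (darVar_pos_of_mem hc₂ hc₄ hθ) hc₄]
  linarith [mul_sq_le_darVar_of_mem (Y := Y) hc₂ hθ]

theorem abs_darVarRatio_le {v : ℝ × ℝ × ℝ} (hv : v ∈ coordDirs) :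
    |darVarRatio Y θ v| ≤ 1 / c₂ + 1 / c₄ := by
  have hs := darVar_pos_of_mem (Y := Y) hc₂ hc₄ hθ
  obtain ⟨h0, h1⟩ := darVar_mem_Icc_of_mem_coordDirs Y hv
  rw [darVarRatio, abs_of_nonneg (div_nonneg h0 hs.le)]
  calc darVar Y v / darVar Y θ ≤ (1 + Y ^ 2) / darVar Y θ := by gcongr
    _ = 1 / darVar Y θ + Y ^ 2 / darVar Y θ := add_div _ _ _
    _ ≤ 1 / c₂ + 1 / c₄ :=
        add_le_add (one_div_darVar_le hc₂ hc₄ hθ) (sq_div_darVar_le hc₂ hc₄ hθ)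

theorem darStdRegressor_sq_le {v : ℝ × ℝ × ℝ} (hv : v ∈ coordDirs) :
    darStdRegressor Y θ v ^ 2 ≤ 1 / c₄ := by
  have hs := darVar_pos_of_mem (Y := Y) hc₂ hc₄ hθ
  rw [darStdRegressor, div_pow, Real.sq_sqrt hs.le, mul_pow]
  calc v.1 ^ 2 * Y ^ 2 / darVar Y θ ≤ Y ^ 2 / darVar Y θ := by
        gcongr; exact mul_le_of_le_one_left (sq_nonneg Y) (sq_fst_le_one_of_mem_coordDirs hv)
    _ ≤ 1 / c₄ := sq_div_darVar_le hc₂ hc₄ hθ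

theorem darStdResid_sq_le {φ₀ ω₀ α₀ : ℝ} (hθ₀ : (φ₀, ω₀, α₀) ∈ darTheta c₁ c₂ c₃ c₄ c₅) (e : ℝ) :
    darStdResid Y (φ₀ * Y + e * √(ω₀ + α₀ * Y ^ 2)) θ ^ 2
      ≤ 8 * c₁ ^ 2 / c₄ + 2 * (ω₀ / c₂ + α₀ / c₄) * e ^ 2 := by
  have hs := darVar_pos_of_mem (Y := Y) hc₂ hc₄ hθ
  obtain ⟨hφ₀, hω₀, -, hα₀, -⟩ := hθ₀
  have hω₀' : 0 ≤ ω₀ := hc₂.le.trans hω₀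
  have hα₀' : 0 ≤ α₀ := hc₄.le.trans hα₀
  have hφ : (φ₀ - θ.1) ^ 2 ≤ 4 * c₁ ^ 2 := by
    have := abs_le.1 hθ.1
    have := abs_le.1 hφ₀
    nlinarith
  have hu : darResid Y (φ₀ * Y + e * √(ω₀ + α₀ * Y ^ 2)) θ
      = (φ₀ - θ.1) * Y + e * √(ω₀ + α₀ * Y ^ 2) := by
    unfold darResid; ring
  rw [darStdResid, div_pow, Real.sq_sqrt hs.le, hu]
  calc ((φ₀ - θ.1) * Y + e * √(ω₀ + α₀ * Y ^ 2)) ^ 2 / darVar Y θ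
      ≤ 2 * (((φ₀ - θ.1) * Y) ^ 2 + (e * √(ω₀ + α₀ * Y ^ 2)) ^ 2) / darVar Y θ := by
        gcongr; exact add_sq_le
    _ = 2 * (φ₀ - θ.1) ^ 2 * (Y ^ 2 / darVar Y θ)
          + 2 * e ^ 2 * (ω₀ * (1 / darVar Y θ) + α₀ * (Y ^ 2 / darVar Y θ)) := by
        rw [mul_pow, mul_pow, Real.sq_sqrt (by positivity)]; ring
    _ ≤ 2 * (4 * c₁ ^ 2) * (1 / c₄) + 2 * e ^ 2 * (ω₀ * (1 / c₂) + α₀ * (1 / c₄)) := by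
        have := sq_div_darVar_le (Y := Y) hc₂ hc₄ hθ
        have := one_div_darVar_le (Y := Y) hc₂ hc₄ hθ
        gcongr
    _ = 8 * c₁ ^ 2 / c₄ + 2 * (ω₀ / c₂ + α₀ / c₄) * e ^ 2 := by ring

theorem abs_darStandardized_le {φ₀ ω₀ α₀ : ℝ} (hθ₀ : (φ₀, ω₀, α₀) ∈ darTheta c₁ c₂ c₃ c₄ c₅)
    (e : ℝ) :
    1 ≤ darConst c₁ c₂ c₄ ω₀ α₀ * (1 + |e|) ∧
    (∀ v ∈ coordDirs, |darVarRatio Y θ v| ≤ darConst c₁ c₂ c₄ ω₀ α₀ * (1 + |e|)) ∧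
    (∀ v ∈ coordDirs, |darStdRegressor Y θ v| ≤ darConst c₁ c₂ c₄ ω₀ α₀ * (1 + |e|)) ∧
    |darStdResid Y (φ₀ * Y + e * √(ω₀ + α₀ * Y ^ 2)) θ| ≤ darConst c₁ c₂ c₄ ω₀ α₀ * (1 + |e|) := by
  set M := darConst c₁ c₂ c₄ ω₀ α₀
  set R := M * (1 + |e|)
  have hM : M = 1 + 1 / c₂ + 1 / c₄ + 8 * c₁ ^ 2 / c₄ + 2 * (ω₀ / c₂ + α₀ / c₄) := rfl
  have hω₀ : 0 ≤ ω₀ := hc₂.le.trans hθ₀.2.1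
  have hα₀ : 0 ≤ α₀ := hc₄.le.trans hθ₀.2.2.2.1
  have hM1 : 1 ≤ M := one_le_darConst hc₂ hc₄ hω₀ hα₀
  have h₁ : 0 ≤ 8 * c₁ ^ 2 / c₄ := by positivity
  have h₀ : 0 ≤ ω₀ / c₂ + α₀ / c₄ := by positivity
  have hMR : M ≤ R := le_mul_of_one_le_right (by linarith) (by linarith [abs_nonneg e])
  have hR2 : M * (1 + e ^ 2) ≤ R ^ 2 := by
    have : 1 + e ^ 2 ≤ (1 + |e|) ^ 2 := by nlinarith [abs_nonneg e, sq_abs e]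
    calc M * (1 + e ^ 2) ≤ M * M * (1 + |e|) ^ 2 := by gcongr; nlinarith
      _ = R ^ 2 := by ring
  have hR : 0 ≤ R := by linarith
  have hA : 1 / c₂ + 1 / c₄ ≤ M := by linarith
  have hB : 1 / c₄ ≤ M * (1 + e ^ 2) := by nlinarith [sq_nonneg e, one_div_pos.2 hc₂]
  have hW : 8 * c₁ ^ 2 / c₄ + 2 * (ω₀ / c₂ + α₀ / c₄) * e ^ 2 ≤ M * (1 + e ^ 2) := by
    nlinarith [sq_nonneg e, one_div_pos.2 hc₂, one_div_pos.2 hc₄]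
  refine ⟨hM1.trans hMR, fun v hv => ?_, fun v hv => ?_, ?_⟩
  · exact (abs_darVarRatio_le hc₂ hc₄ hθ hv).trans (hA.trans hMR)
  · exact abs_le_of_sq_le_sq ((darStdRegressor_sq_le hc₂ hc₄ hθ hv).trans (hB.trans hR2)) hR
  · exact abs_le_of_sq_le_sq ((darStdResid_sq_le hc₂ hc₄ hθ hθ₀ e).trans (hW.trans hR2)) hR

end ParameterSpace

theorem abs_fderiv_fderiv_darL_le {c₁ c₂ c₃ c₄ c₅ φ₀ ω₀ α₀ Y e : ℝ} (hc₂ : 0 < c₂) (hc₄ : 0 < c₄)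
    (hθ₀ : (φ₀, ω₀, α₀) ∈ darTheta c₁ c₂ c₃ c₄ c₅) {θ a b : ℝ × ℝ × ℝ}
    (hθ : θ ∈ darTheta c₁ c₂ c₃ c₄ c₅) (ha : a ∈ coordDirs) (hb : b ∈ coordDirs) :
    |fderiv ℝ (fun θ' => fderiv ℝ (darL Y (φ₀ * Y + e * √(ω₀ + α₀ * Y ^ 2))) θ' b) θ a|
      ≤ 5 * darConst c₁ c₂ c₄ ω₀ α₀ ^ 4 * (1 + |e|) ^ 4 := by
  have hs := darVar_pos_of_mem (Y := Y) hc₂ hc₄ hθ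
  obtain ⟨hR, hA, hB, hW⟩ := abs_darStandardized_le (Y := Y) hc₂ hc₄ hθ hθ₀ e
  rw [fderiv_fderiv_darL_apply _ _ hs.ne']
  exact (abs_darLDeriv2_le _ hs hR hA hB hW hb ha).trans_eq (by ring)

theorem abs_fderiv_fderiv_fderiv_darL_le {c₁ c₂ c₃ c₄ c₅ φ₀ ω₀ α₀ Y e : ℝ} (hc₂ : 0 < c₂)
    (hc₄ : 0 < c₄) (hθ₀ : (φ₀, ω₀, α₀) ∈ darTheta c₁ c₂ c₃ c₄ c₅) {θ a b c : ℝ × ℝ × ℝ}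
    (hθ : θ ∈ darTheta c₁ c₂ c₃ c₄ c₅) (ha : a ∈ coordDirs) (hb : b ∈ coordDirs)
    (hc : c ∈ coordDirs) :
    |fderiv ℝ (fun θ' => fderiv ℝ (fun θ'' =>
        fderiv ℝ (darL Y (φ₀ * Y + e * √(ω₀ + α₀ * Y ^ 2))) θ'' c) θ' b) θ a|
      ≤ 13 * darConst c₁ c₂ c₄ ω₀ α₀ ^ 5 * (1 + |e|) ^ 5 := by
  have hs := darVar_pos_of_mem (Y := Y) hc₂ hc₄ hθ
  obtain ⟨hR, hA, hB, hW⟩ := abs_darStandardized_le (Y := Y) hc₂ hc₄ hθ hθ₀ e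
  rw [fderiv_fderiv_fderiv_darL_apply _ _ hs.ne']
  exact (abs_darLDeriv3_le _ hs hR hA hB hW hc hb ha).trans_eq (by ring)

theorem lintegral_ofReal_rpow_lt_top_gaussianReal (m : ℝ) (v : NNReal) {C : ℝ} (hC : 0 ≤ C)
    (n : ℕ) {d : ℝ} (hd : 0 ≤ d) :
    ∫⁻ x, ENNReal.ofReal ((C * (1 + |x|) ^ n) ^ d) ∂gaussianReal m v < ⊤ := by
  have hmem : MemLp (fun x : ℝ => 1 + ‖x‖) (ENNReal.ofReal (n * d)) (gaussianReal m v) :=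
    (memLp_const (1 : ℝ)).add (memLp_id_gaussianReal' _ ENNReal.ofReal_ne_top).norm
  have hint : Integrable (fun x : ℝ => (C * (1 + |x|) ^ n) ^ d) (gaussianReal m v) := by
    refine (hmem.integrable_norm_rpow'.const_mul (C ^ d)).congr (ae_of_all _ fun x => ?_)
    have hx : 0 ≤ 1 + |x| := by positivity
    simp only [Real.norm_eq_abs, abs_of_nonneg hx,
      ENNReal.toReal_ofReal (by positivity : (0 : ℝ) ≤ n * d)]
    rw [Real.mul_rpow hC (by positivity), Real.rpow_natCast_mul hx]
  exact hint.lintegral_lt_top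

theorem lintegral_iSup_ofReal_rpow_lt_top {Ω ι : Type*} [MeasurableSpace Ω] {P : Measure Ω}
    {e : Ω → ℝ} (he : Measurable e) (heG : P.map e = gaussianReal 0 1) {s : Set ι}
    {F : Ω → ι → ℝ} {C : ℝ} (hC : 0 ≤ C) {n : ℕ}
    (hF : ∀ ω, ∀ θ ∈ s, |F ω θ| ≤ C * (1 + |e ω|) ^ n) {d : ℝ} (hd : 0 ≤ d) :
    ∫⁻ ω, ⨆ θ ∈ s, ENNReal.ofReal (|F ω θ| ^ d) ∂P < ⊤ := by
  have hmeas : Measurable fun x : ℝ => ENNReal.ofReal ((C * (1 + |x|) ^ n) ^ d) := by fun_prop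
  calc ∫⁻ ω, ⨆ θ ∈ s, ENNReal.ofReal (|F ω θ| ^ d) ∂P
      ≤ ∫⁻ ω, ENNReal.ofReal ((C * (1 + |e ω|) ^ n) ^ d) ∂P :=
        lintegral_mono fun ω => iSup₂_le fun θ hθ =>
          ENNReal.ofReal_le_ofReal (Real.rpow_le_rpow (abs_nonneg _) (hF ω θ hθ) hd)
    _ = ∫⁻ x, ENNReal.ofReal ((C * (1 + |x|) ^ n) ^ d) ∂(P.map e) := (lintegral_map hmeas he).symm
    _ < ⊤ := heG ▸ lintegral_ofReal_rpow_lt_top_gaussianReal 0 1 hC n hd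

end

theorem stmt14_general {Ω : Type*} [MeasurableSpace Ω] (P : Measure Ω)
    (c₁ c₂ c₃ c₄ c₅ : ℝ)
    (hc₂ : 0 < c₂) (hc₄ : 0 < c₄)
    (φ₀ ω₀ α₀ : ℝ) (hθ₀ : (φ₀, ω₀, α₀) ∈ darTheta c₁ c₂ c₃ c₄ c₅)
    (Y e : Ω → ℝ) (he : Measurable e)
    (heG : P.map e = gaussianReal 0 1) :
    ∀ d : ℝ, 1 ≤ d →
      ∀ di ∈ ({(1, 0, 0), (0, 1, 0), (0, 0, 1)} : Set (ℝ × ℝ × ℝ)),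
      ∀ dj ∈ ({(1, 0, 0), (0, 1, 0), (0, 0, 1)} : Set (ℝ × ℝ × ℝ)),
      ∀ dk ∈ ({(1, 0, 0), (0, 1, 0), (0, 0, 1)} : Set (ℝ × ℝ × ℝ)),
        (∫⁻ ω', ⨆ θ ∈ darTheta c₁ c₂ c₃ c₄ c₅,
          ENNReal.ofReal
            (|fderiv ℝ (fun θ' => fderiv ℝ
                  (darL (Y ω') (φ₀ * Y ω' + e ω' * Real.sqrt (ω₀ + α₀ * Y ω' ^ 2))) θ' dj)
                θ di| ^ d) ∂P < ⊤) ∧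
        (∫⁻ ω', ⨆ θ ∈ darTheta c₁ c₂ c₃ c₄ c₅,
          ENNReal.ofReal
            (|fderiv ℝ (fun θ' => fderiv ℝ (fun θ'' => fderiv ℝ
                  (darL (Y ω') (φ₀ * Y ω' + e ω' * Real.sqrt (ω₀ + α₀ * Y ω' ^ 2))) θ'' dk)
                  θ' dj) θ di| ^ d) ∂P < ⊤) := by
  intro d hd di hdi dj hdj dk hdk
  have hd0 : 0 ≤ d := zero_le_one.trans hd
  have hM : 0 ≤ darConst c₁ c₂ c₄ ω₀ α₀ :=
    zero_le_one.trans (one_le_darConst hc₂ hc₄ (hc₂.le.trans hθ₀.2.1) (hc₄.le.trans hθ₀.2.2.2.1))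
  exact ⟨lintegral_iSup_ofReal_rpow_lt_top he heG (by positivity)
      (fun _ _ hθ => abs_fderiv_fderiv_darL_le hc₂ hc₄ hθ₀ hθ hdi hdj) hd0,
    lintegral_iSup_ofReal_rpow_lt_top he heG (by positivity)
      (fun _ _ hθ => abs_fderiv_fderiv_fderiv_darL_le hc₂ hc₄ hθ₀ hθ hdi hdj hdk) hd0⟩

/-- Lemma A.10, higher-order part: in the DAR(1) setup with standard Gaussian innovation
`e` independent of `Y` and `X = φ₀ Y + e √(ω₀ + α₀ Y²)`, for every `d ≥ 1` and all
parameter coordinates (directions among `(1,0,0)`, `(0,1,0)`, `(0,0,1)` for `φ, ω, α`),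
`E[sup_{θ∈Θ} |∂²l/∂θᵢ∂θⱼ(θ)|^d] < ∞` and `E[sup_{θ∈Θ} |∂³l/∂θᵢ∂θⱼ∂θ_k(θ)|^d] < ∞`. -/
theorem stmt14 {Ω : Type*} [MeasurableSpace Ω] (P : Measure Ω) [IsProbabilityMeasure P]
    (c₁ c₂ c₃ c₄ c₅ : ℝ)
    (hc₁ : 0 < c₁) (hc₂ : 0 < c₂) (hc₃ : 0 < c₃) (hc₄ : 0 < c₄) (hc₅ : 0 < c₅)
    (φ₀ ω₀ α₀ : ℝ) (hθ₀ : (φ₀, ω₀, α₀) ∈ darTheta c₁ c₂ c₃ c₄ c₅)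
    (Y e : Ω → ℝ) (hY : Measurable Y) (he : Measurable e)
    (heG : P.map e = gaussianReal 0 1) (hind : IndepFun Y e P) :
    ∀ d : ℝ, 1 ≤ d →
      ∀ di ∈ ({(1, 0, 0), (0, 1, 0), (0, 0, 1)} : Set (ℝ × ℝ × ℝ)),
      ∀ dj ∈ ({(1, 0, 0), (0, 1, 0), (0, 0, 1)} : Set (ℝ × ℝ × ℝ)),
      ∀ dk ∈ ({(1, 0, 0), (0, 1, 0), (0, 0, 1)} : Set (ℝ × ℝ × ℝ)),
        (∫⁻ ω', ⨆ θ ∈ darTheta c₁ c₂ c₃ c₄ c₅,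
          ENNReal.ofReal
            (|fderiv ℝ (fun θ' => fderiv ℝ
                  (darL (Y ω') (φ₀ * Y ω' + e ω' * Real.sqrt (ω₀ + α₀ * Y ω' ^ 2))) θ' dj)
                θ di| ^ d) ∂P < ⊤) ∧
        (∫⁻ ω', ⨆ θ ∈ darTheta c₁ c₂ c₃ c₄ c₅,
          ENNReal.ofReal
            (|fderiv ℝ (fun θ' => fderiv ℝ (fun θ'' => fderiv ℝ
                  (darL (Y ω') (φ₀ * Y ω' + e ω' * Real.sqrt (ω₀ + α₀ * Y ω' ^ 2))) θ'' dk)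
                  θ' dj) θ di| ^ d) ∂P < ⊤) :=
  stmt14_general P c₁ c₂ c₃ c₄ c₅ hc₂ hc₄ φ₀ ω₀ α₀ hθ₀ Y e he heG
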